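/- For every natural number n and complex number a with (2a+1)_k ≠ 0 for 0 ≤ k ≤ 2n, ∑_{k=0}^{2n} (-2n)_k (a)_k 2^k / ((2a+1)_k k!) = (1/2)_n / (a+1/2)_n. -/

import Mathlib

open Finset

/-- The Pochhammer symbol (rising factorial) `(x)_k = x (x+1) ⋯ (x+k-1)`. -/
noncomputable def poch (x : ℂ) (k : ℕ) : ℂ := (ascPochhammer ℂ k).eval x

/-!
The ratios `u k = (a)_k / (2a+1)_k` are the moments `L (X ^ k)` of a linear functional `L` on
polynomials (formally, integration against `t ^ (a-1) (1-t) ^ a dt` on `[0, 1]`, normalised), and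
`(2a+1+k) u (k+1) = (a+k) u k` says that `L` satisfies the Pearson equation
`L ((y X - x) p + X (X - 1) p') = 0` with `x = a`, `y = 2a + 1`, for `deg p < 2n`. The sum is `G (2n)` where
`G m = L ((1 - 2X) ^ m)`, and the Pearson equation for `p = (1 - 2X) ^ m` is the three-term
recurrence `(2a+1+m) G (m+1) = G m + m G (m-1)`. Solving it gives
`(2a+2j+1) G (2j+1) = (2j+1) G (2j)` and `G (2j+2) = G (2j+1)`, hence
`(a+j+1/2) G (2j+2) = (j+1/2) G (2j)`.
-/

namespace Polynomial

variable {R : Type*} [CommRing R]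

noncomputable def momentFunctional (u : ℕ → R) : R[X] →ₗ[R] R :=
  lsum fun k => LinearMap.mulRight R (u k)

theorem momentFunctional_C_mul_X_pow (u : ℕ → R) (k : ℕ) (c : R) :
    momentFunctional u (C c * X ^ k) = c * u k := by
  simp [momentFunctional, C_mul_X_pow_eq_monomial]

theorem momentFunctional_one_sub_two_mul_X_pow (u : ℕ → R) (m : ℕ) :
    momentFunctional u ((1 - 2 * X) ^ m)
      = ∑ k ∈ range (m + 1), (m.choose k : R) * (-2) ^ k * u k := by
  rw [sub_eq_neg_add, add_pow, map_sum]
  refine sum_congr rfl fun k _ => ?_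
  rw [← momentFunctional_C_mul_X_pow u k]
  congr 1
  simp only [one_pow, mul_one, C_mul, C_pow, C_neg, C_ofNat, map_natCast]
  ring

noncomputable def pearsonOperator (x y : R) : R[X] →ₗ[R] R[X] :=
  LinearMap.mulLeft R (C y * X - C x) + LinearMap.mulLeft R (X * (X - 1)) ∘ₗ derivative

theorem pearsonOperator_apply (x y : R) (p : R[X]) :
    pearsonOperator x y p = (C y * X - C x) * p + X * (X - 1) * derivative p :=
  rfl

theorem pearsonOperator_X_pow (x y : R) (k : ℕ) :
    pearsonOperator x y (X ^ k) = C (y + k) * X ^ (k + 1) - C (x + k) * X ^ k := by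
  rw [pearsonOperator_apply]
  cases k with
  | zero => simp
  | succ k => simp; ring

theorem momentFunctional_pearsonOperator {u : ℕ → R} {x y : R} {N : ℕ}
    (hu : ∀ k < N, (y + k) * u (k + 1) = (x + k) * u k) {p : R[X]} (hp : p.natDegree < N) :
    momentFunctional u (pearsonOperator x y p) = 0 := by
  rw [as_sum_range_C_mul_X_pow' p hp, map_sum, map_sum]
  refine sum_eq_zero fun k hk => ?_
  rw [← smul_eq_C_mul, map_smul, map_smul, pearsonOperator_X_pow, map_sub,
    momentFunctional_C_mul_X_pow, momentFunctional_C_mul_X_pow, hu k (mem_range.1 hk), sub_self,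
    smul_zero]

theorem momentFunctional_recurrence {u : ℕ → R} {x y : R} {N : ℕ}
    (hu : ∀ k < N, (y + k) * u (k + 1) = (x + k) * u k) {m : ℕ} (hm : m < N) :
    (y + m) * momentFunctional u ((1 - 2 * X) ^ (m + 1))
      = (y - 2 * x) * momentFunctional u ((1 - 2 * X) ^ m)
        + m * momentFunctional u ((1 - 2 * X) ^ (m - 1)) := by
  have hdeg : ((1 - 2 * X : R[X]) ^ m).natDegree < N := by
    refine lt_of_le_of_lt ?_ hm
    compute_degree
  have hpearson : (2 : R) • pearsonOperator x y ((1 - 2 * X) ^ m)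
      = (y - 2 * x) • (1 - 2 * X) ^ m + (m : R) • (1 - 2 * X) ^ (m - 1)
        - (y + m) • (1 - 2 * X) ^ (m + 1) := by
    simp only [pearsonOperator_apply, smul_eq_C_mul]
    cases m with
    | zero => simp [C_ofNat]; ring
    | succ m =>
      simp only [derivative_pow, derivative_sub, derivative_one, derivative_mul, derivative_X,
        derivative_ofNat, C_add, C_sub, C_mul, map_natCast, C_ofNat, Nat.add_sub_cancel]
      push_cast
      ring
  have := congrArg (momentFunctional u) hpearson
  rw [map_smul, momentFunctional_pearsonOperator hu hdeg, smul_zero, map_sub, map_add, map_smul,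
    map_smul, map_smul] at this
  simp only [smul_eq_mul] at this
  linear_combination this

end Polynomial

theorem poch_zero (x : ℂ) : poch x 0 = 1 := by
  simp [poch]

theorem poch_succ (x : ℂ) (k : ℕ) : poch x (k + 1) = poch x k * (x + k) :=
  ascPochhammer_succ_eval k x

theorem poch_ne_zero_iff (x : ℂ) (k : ℕ) : poch x k ≠ 0 ↔ ∀ i < k, x + i ≠ 0 := by
  rw [poch, Ne, ascPochhammer_eval_eq_zero_iff]
  simp [eq_neg_iff_add_eq_zero, add_comm]

theorem poch_neg_natCast (N k : ℕ) : poch (-(N : ℂ)) k = (-1) ^ k * N.descFactorial k := by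
  rw [poch, ascPochhammer_eval_neg_eq_descPochhammer, descPochhammer_eval_eq_descFactorial]

theorem poch_neg_natCast_mul_two_pow_div_factorial (N k : ℕ) :
    poch (-(N : ℂ)) k * 2 ^ k / k.factorial = N.choose k * (-2) ^ k := by
  rw [poch_neg_natCast, Nat.descFactorial_eq_factorial_mul_choose]
  have := k.factorial_ne_zero
  push_cast
  field_simp
  rw [neg_pow (2 : ℂ)]
  ring

theorem add_mul_poch_succ_div_poch_succ {x y : ℂ} {k : ℕ} (h : poch y (k + 1) ≠ 0) :
    (y + k) * (poch x (k + 1) / poch y (k + 1)) = (x + k) * (poch x k / poch y k) := by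
  rw [poch_succ] at h ⊢
  rw [poch_succ]
  obtain ⟨hy, hyk⟩ := mul_ne_zero_iff.1 h
  field_simp

theorem odd_even_of_recurrence {g : ℕ → ℂ} {a : ℂ} {n : ℕ}
    (hne : ∀ m < 2 * n, 2 * a + 1 + m ≠ 0)
    (hrec : ∀ m < 2 * n, (2 * a + 1 + m) * g (m + 1) = g m + m * g (m - 1)) :
    ∀ j < n, (2 * a + 1 + 2 * j) * g (2 * j + 1) = (2 * j + 1) * g (2 * j)
      ∧ g (2 * j + 2) = g (2 * j + 1) := by
  have heven : ∀ j < n, (2 * a + 1 + 2 * j) * g (2 * j + 1) = (2 * j + 1) * g (2 * j) →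
      g (2 * j + 2) = g (2 * j + 1) := by
    intro j hj hodd
    have h := hrec (2 * j + 1) (by omega)
    have hc := hne (2 * j + 1) (by omega)
    push_cast at h hc
    refine mul_left_cancel₀ hc ?_
    linear_combination h - hodd
  intro j hj
  induction j with
  | zero =>
    have hodd : (2 * a + 1 + 2 * (0 : ℕ)) * g (2 * 0 + 1) = (2 * (0 : ℕ) + 1) * g (2 * 0) := by
      simpa using hrec 0 (by omega)
    exact ⟨hodd, heven 0 hj hodd⟩
  | succ j ih =>
    have h := hrec (2 * j + 2) (by omega)
    rw [show 2 * j + 2 - 1 = 2 * j + 1 by omega] at h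
    have hodd : (2 * a + 1 + 2 * ((j + 1 : ℕ) : ℂ)) * g (2 * (j + 1) + 1)
        = (2 * ((j + 1 : ℕ) : ℂ) + 1) * g (2 * (j + 1)) := by
      push_cast at h ⊢
      linear_combination h - (2 * j + 2) * (ih (by omega)).2
    exact ⟨hodd, heven (j + 1) hj hodd⟩

theorem poch_mul_of_recurrence {g : ℕ → ℂ} {a : ℂ} {n : ℕ}
    (hne : ∀ m < 2 * n, 2 * a + 1 + m ≠ 0)
    (hrec : ∀ m < 2 * n, (2 * a + 1 + m) * g (m + 1) = g m + m * g (m - 1)) :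
    poch (a + 1 / 2) n * g (2 * n) = poch (1 / 2) n * g 0 := by
  suffices ∀ j ≤ n, poch (a + 1 / 2) j * g (2 * j) = poch (1 / 2) j * g 0 from this n le_rfl
  intro j hj
  induction j with
  | zero => simp [poch_zero]
  | succ j ih =>
    obtain ⟨hodd, heven⟩ := odd_even_of_recurrence hne hrec j (by omega)
    rw [poch_succ, poch_succ, show 2 * (j + 1) = 2 * j + 2 by ring, heven]
    linear_combination (1 / 2 * poch (a + 1 / 2) j) * hodd + (1 / 2 + j) * ih (by omega)

open Polynomial in
theorem twoF1_neg2n_a_twoAp1 (n : ℕ) (a : ℂ) (h : ∀ k ≤ 2 * n, poch (2 * a + 1) k ≠ 0) :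
    ∑ k ∈ range (2 * n + 1),
        poch (-(2 * n : ℂ)) k * poch a k * 2 ^ k / (poch (2 * a + 1) k * (k.factorial : ℂ))
      = poch (1 / 2) n / poch (a + 1 / 2) n := by
  set u : ℕ → ℂ := fun k => poch a k / poch (2 * a + 1) k
  set G : ℕ → ℂ := fun m => momentFunctional u ((1 - 2 * X) ^ m)
  have hne : ∀ m < 2 * n, 2 * a + 1 + m ≠ 0 := (poch_ne_zero_iff _ _).1 (h _ le_rfl)
  have hu : ∀ k < 2 * n, (2 * a + 1 + k) * u (k + 1) = (a + k) * u k :=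
    fun k hk => add_mul_poch_succ_div_poch_succ (h (k + 1) hk)
  have hrec : ∀ m < 2 * n, (2 * a + 1 + m) * G (m + 1) = G m + m * G (m - 1) := by
    intro m hm
    simpa using momentFunctional_recurrence hu hm
  have hsum : ∑ k ∈ range (2 * n + 1),
        poch (-(2 * n : ℂ)) k * poch a k * 2 ^ k / (poch (2 * a + 1) k * (k.factorial : ℂ))
      = G (2 * n) := by
    simp only [G, momentFunctional_one_sub_two_mul_X_pow]
    refine sum_congr rfl fun k _ => ?_
    rw [← poch_neg_natCast_mul_two_pow_div_factorial]
    push_cast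
    ring
  have hG0 : G 0 = 1 := by simp [G, momentFunctional_one_sub_two_mul_X_pow, u, poch_zero]
  have hhalf : poch (a + 1 / 2) n ≠ 0 := by
    refine (poch_ne_zero_iff _ _).2 fun i hi => ?_
    have := hne (2 * i) (by omega)
    contrapose! this
    push_cast
    linear_combination 2 * this
  rw [hsum, eq_div_iff hhalf, mul_comm, poch_mul_of_recurrence hne hrec, hG0, mul_one]
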